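/- arXiv:2508.16338 — 2 statements merged into one kernel-verified Lean document; each statement's English description precedes it below -/
import Mathlib

section
/- Let G and H be finite simple graphs, let k = ω(I(H)) and ℓ = ω(I(G)), where I(·) denotes the isolation graph and ω the clique number. Then ι(G □ H) ≤ min{α_k(G)·ι(H) + (n(G) − α_k(G))·γ(H), α_ℓ(H)·ι(G) + (n(H) − α_ℓ(H))·γ(G)}, where α_k(G) denotes the maximum cardinality of a set of vertices inducing a k-colorable subgraph of G and n(G) denotes the order of G. -/
/-- The closed neighborhood `N[A]` of a set of vertices. -/
def closedNbhd {V : Type*} (G : SimpleGraph V) (A : Set V) : Set V :=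
  {v | v ∈ A ∨ ∃ a ∈ A, G.Adj a v}

/-- A set of vertices is independent if it contains no edge. -/
def IndepSet {V : Type*} (G : SimpleGraph V) (S : Set V) : Prop :=
  ∀ u ∈ S, ∀ v ∈ S, ¬ G.Adj u v

/-- `A` is isolating if the vertices outside `N[A]` form an independent set. -/
def IsIsolating {V : Type*} (G : SimpleGraph V) (A : Set V) : Prop :=
  IndepSet G (closedNbhd G A)ᶜ

/-- The isolation number `ι(G)`. -/
noncomputable def isolationNum {V : Type*} (G : SimpleGraph V) : ℕ :=
  sInf {n | ∃ A : Set V, IsIsolating G A ∧ A.ncard = n}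

/-- `D` is a dominating set if `N[D] = V(G)`. -/
def IsDominating {V : Type*} (G : SimpleGraph V) (D : Set V) : Prop :=
  closedNbhd G D = Set.univ

/-- The domination number `γ(G)`. -/
noncomputable def dominationNum {V : Type*} (G : SimpleGraph V) : ℕ :=
  sInf {n | ∃ D : Set V, IsDominating G D ∧ D.ncard = n}
/-- The independence number `α(G)`. -/
noncomputable def indepNum {V : Type*} (G : SimpleGraph V) : ℕ :=
  sSup {n | ∃ S : Set V, IndepSet G S ∧ S.ncard = n}

/-- A vertex cover: a set of vertices meeting every edge. -/
def IsVertexCover {V : Type*} (G : SimpleGraph V) (B : Set V) : Prop :=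
  ∀ u v, G.Adj u v → u ∈ B ∨ v ∈ B

/-- The vertex cover number `β(G)`. -/
noncomputable def vertexCoverNum {V : Type*} (G : SimpleGraph V) : ℕ :=
  sInf {n | ∃ B : Set V, IsVertexCover G B ∧ B.ncard = n}
/-- The set of vertices outside `N[A]`. -/
def leftoverSet {V : Type*} (G : SimpleGraph V) (A : Set V) : Set V :=
  (closedNbhd G A)ᶜ

/-- The vertices of the isolation graph: the `ι(G)`-sets. -/
def IotaSets (V : Type*) (G : SimpleGraph V) : Type _ :=
  {A : Set V // IsIsolating G A ∧ A.ncard = isolationNum G}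

/-- The isolation graph `I(G)`: vertices are the `ι(G)`-sets, two distinct such sets
`A`, `B` being adjacent whenever `L_A ∩ L_B = ∅`. -/
def isolationGraph {V : Type*} (G : SimpleGraph V) : SimpleGraph (IotaSets V G) where
  Adj A B := A ≠ B ∧ leftoverSet G A.1 ∩ leftoverSet G B.1 = ∅
  symm := ⟨fun A B h => ⟨h.1.symm, by rw [Set.inter_comm]; exact h.2⟩⟩
  loopless := ⟨fun A h => h.1 rfl⟩

/-- The clique number `ω(G)`. -/
noncomputable def cliqueNumber {W : Type*} (G : SimpleGraph W) : ℕ :=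
  sSup {n | ∃ S : Set W, (∀ u ∈ S, ∀ v ∈ S, u ≠ v → G.Adj u v) ∧ S.ncard = n}

/-- `α_k(G)`: the maximum number of vertices inducing a `k`-colorable subgraph of `G`. -/
noncomputable def alphaK {V : Type*} (G : SimpleGraph V) (k : ℕ) : ℕ :=
  sSup {n | ∃ S : Set V,
    (∃ c : V → Fin k, ∀ u ∈ S, ∀ v ∈ S, G.Adj u v → c u ≠ c v) ∧ S.ncard = n}

/-!
Every fibre `{u} × H` of `G □ H` receives a set `T u ⊆ V(H)`: a `γ(H)`-set when `u` lies
outside a largest `k`-colourable set `S` of `G`, and otherwise the `ι(H)`-set of a fixed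
`k`-clique of `I(H)` named by the colour of `u`. A vertex `(u, w)` escaping `N[⋃ {u} × T u]`
then has `u ∈ S` and `w ∈ L_{T u}`. Two such vertices in one fibre are non-adjacent because
`T u` isolates `H`; in one `G`-layer they would need adjacent `u, v ∈ S`, which get different
colours, hence `I(H)`-adjacent sets with `L_{T u} ∩ L_{T v} = ∅`. Exchanging the factors gives
the second bound.
-/

open SimpleGraph

section Basic

variable {V : Type*} (G : SimpleGraph V)

theorem exists_isIsolating_ncard_eq_isolationNum :
    ∃ A : Set V, IsIsolating G A ∧ A.ncard = isolationNum G :=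
  Nat.sInf_mem (s := {n | ∃ A : Set V, IsIsolating G A ∧ A.ncard = n})
    ⟨_, Set.univ, fun u hu => absurd (Or.inl (Set.mem_univ u)) hu, rfl⟩

theorem exists_isDominating_ncard_eq_dominationNum :
    ∃ D : Set V, IsDominating G D ∧ D.ncard = dominationNum G :=
  Nat.sInf_mem (s := {n | ∃ D : Set V, IsDominating G D ∧ D.ncard = n})
    ⟨_, Set.univ, Set.eq_univ_of_forall fun v => Or.inl (Set.mem_univ v), rfl⟩

variable {G}

theorem isolationNum_le_ncard {A : Set V} (hA : IsIsolating G A) : isolationNum G ≤ A.ncard :=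
  Nat.sInf_le ⟨A, hA, rfl⟩

theorem IsIsolating.image_iso {V' : Type*} {G' : SimpleGraph V'} (e : G ≃g G') {A : Set V}
    (hA : IsIsolating G A) : IsIsolating G' (e '' A) := by
  have hpull : ∀ x, x ∉ closedNbhd G' (e '' A) → e.symm x ∉ closedNbhd G A := by
    rintro x hx (hmem | ⟨a, ha, hadj⟩)
    · exact hx (Or.inl ⟨e.symm x, hmem, by simp⟩)
    · exact hx (Or.inr ⟨e a, ⟨a, ha, rfl⟩, by simpa using e.map_adj_iff.mpr hadj⟩)
  intro u hu v hv huv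
  exact hA _ (hpull u hu) _ (hpull v hv) (e.symm.map_adj_iff.mpr huv)

theorem isolationNum_le_of_iso {V' : Type*} {G' : SimpleGraph V'} (e : G ≃g G') :
    isolationNum G ≤ isolationNum G' := by
  obtain ⟨A, hA, hcard⟩ := exists_isIsolating_ncard_eq_isolationNum G'
  calc isolationNum G ≤ (e.symm '' A).ncard := isolationNum_le_ncard (hA.image_iso e.symm)
    _ = isolationNum G' := by rw [Set.ncard_image_of_injective A e.symm.injective, hcard]

end Basic

instance {V : Type*} [Finite V] (G : SimpleGraph V) : Finite (IotaSets V G) :=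
  Subtype.finite

theorem exists_topEmbedding_cliqueNumber {W : Type*} [Finite W] (G : SimpleGraph W) :
    Nonempty (completeGraph (Fin (cliqueNumber G)) ↪g G) := by
  set P := {n | ∃ S : Set W, (∀ u ∈ S, ∀ v ∈ S, u ≠ v → G.Adj u v) ∧ S.ncard = n}
  have hbdd : BddAbove P := ⟨Nat.card W, by rintro n ⟨S, -, rfl⟩; exact Set.ncard_le_card S⟩
  obtain ⟨S, hclique, hcard⟩ := Nat.sSup_mem (s := P) ⟨0, ∅, by simp, Set.ncard_empty W⟩ hbdd
  have : G.IsNClique (cliqueNumber G) (Set.toFinite S).toFinset :=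
    ⟨by simpa [SimpleGraph.IsClique, Set.Pairwise] using hclique,
      by rw [← Set.ncard_eq_toFinset_card S, hcard, cliqueNumber]⟩
  exact ⟨topEmbeddingOfNotCliqueFree this.not_cliqueFree⟩

theorem exists_coloring_ncard_eq_alphaK {V : Type*} [Finite V] (G : SimpleGraph V) (k : ℕ) :
    ∃ S : Set V, S.ncard = alphaK G k ∧ Nonempty ((G.induce S).Coloring (Fin k)) := by
  set P := {n | ∃ S : Set V,
    (∃ c : V → Fin k, ∀ u ∈ S, ∀ v ∈ S, G.Adj u v → c u ≠ c v) ∧ S.ncard = n}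
  rcases P.eq_empty_or_nonempty with hP | hP
  · -- no `c : V → Fin k` at all, so `α_k(G) = sSup ∅ = 0`
    refine ⟨∅, ?_, ⟨Coloring.mk isEmptyElim fun {v} => isEmptyElim v⟩⟩
    rw [Set.ncard_empty]
    change 0 = sSup P
    rw [hP, csSup_empty, Nat.bot_eq_zero]
  · have hbdd : BddAbove P := ⟨Nat.card V, by rintro n ⟨S, -, rfl⟩; exact Set.ncard_le_card S⟩
    obtain ⟨S, ⟨c, hc⟩, hcard⟩ := Nat.sSup_mem hP hbdd
    exact ⟨S, hcard, ⟨Coloring.mk (fun v => c v) fun {u v} huv => hc u u.2 v v.2 huv⟩⟩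

section BoxProd

variable {V W : Type*} (G : SimpleGraph V) (H : SimpleGraph W)

theorem isIsolating_boxProd_of_fibers (S : Set V) (T : V → Set W)
    (hdom : ∀ u ∉ S, IsDominating H (T u)) (hiso : ∀ u ∈ S, IsIsolating H (T u))
    (hdisj : ∀ u ∈ S, ∀ v ∈ S, G.Adj u v → leftoverSet H (T u) ∩ leftoverSet H (T v) = ∅) :
    IsIsolating (G □ H) {p | p.2 ∈ T p.1} := by
  have hleft : ∀ p : V × W, p ∉ closedNbhd (G □ H) {p | p.2 ∈ T p.1} →
      p.2 ∈ leftoverSet H (T p.1) := by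
    rintro p hp (hmem | ⟨w, hw, hadj⟩)
    · exact hp (Or.inl hmem)
    · exact hp (Or.inr ⟨(p.1, w), hw, Or.inr ⟨hadj, rfl⟩⟩)
  have hmemS : ∀ p : V × W, p ∉ closedNbhd (G □ H) {p | p.2 ∈ T p.1} → p.1 ∈ S := by
    intro p hp
    by_contra hpS
    have := hleft p hp
    rw [leftoverSet, hdom p.1 hpS] at this
    exact this (Set.mem_univ _)
  rintro p hp q hq (⟨hG, hsnd⟩ | ⟨hH, hfst⟩)
  · have hpq : p.2 ∈ leftoverSet H (T p.1) ∩ leftoverSet H (T q.1) :=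
      ⟨hleft p hp, hsnd ▸ hleft q hq⟩
    rwa [hdisj p.1 (hmemS p hp) q.1 (hmemS q hq) hG] at hpq
  · exact hiso p.1 (hmemS p hp) p.2 (hleft p hp) q.2 (hfst ▸ hleft q hq) hH

variable [Fintype V] [Fintype W]

theorem ncard_setOf_snd_mem (T : V → Set W) :
    {p : V × W | p.2 ∈ T p.1}.ncard = ∑ u, (T u).ncard := by
  classical
  have hfin : {p : V × W | p.2 ∈ T p.1} = ↑(Finset.univ.filter fun p : V × W => p.2 ∈ T p.1) := by
    ext; simp
  rw [hfin, Set.ncard_coe_finset, Finset.card_filter, Fintype.sum_prod_type]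
  refine Finset.sum_congr rfl fun u _ => ?_
  rw [← Finset.card_filter, Set.ncard_eq_toFinset_card']
  congr 1
  ext w
  simp

theorem sum_ite_mem_eq (S : Set V) [DecidablePred (· ∈ S)] (a b : ℕ) :
    ∑ u, (if u ∈ S then a else b) = S.ncard * a + (Fintype.card V - S.ncard) * b := by
  rw [Finset.sum_ite, Finset.sum_const, Finset.sum_const, smul_eq_mul, smul_eq_mul,
    ← Nat.card_eq_fintype_card, ← Set.ncard_compl S, Set.ncard_eq_toFinset_card',
    Set.ncard_eq_toFinset_card']
  congr 3 <;> ext <;> simp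

theorem isolationNum_boxProd_le_of_hom (S : Set V) (c : G.induce S →g isolationGraph H) :
    isolationNum (G □ H) ≤
      S.ncard * isolationNum H + (Fintype.card V - S.ncard) * dominationNum H := by
  classical
  obtain ⟨D, hD, hDcard⟩ := exists_isDominating_ncard_eq_dominationNum H
  let T : V → Set W := fun u => if hu : u ∈ S then (c ⟨u, hu⟩).1 else D
  have hT : ∀ u, (T u).ncard = if u ∈ S then isolationNum H else dominationNum H := by
    intro u
    by_cases hu : u ∈ S
    · simpa [T, hu] using (c ⟨u, hu⟩).2.2
    · simpa [T, hu] using hDcard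
  have hiso : IsIsolating (G □ H) {p | p.2 ∈ T p.1} := by
    refine isIsolating_boxProd_of_fibers G H S T (fun u hu => by simpa [T, hu] using hD)
      (fun u hu => by simpa [T, hu] using (c ⟨u, hu⟩).2.1) fun u hu v hv huv => ?_
    simpa [T, hu, hv] using (c.map_adj (show (G.induce S).Adj ⟨u, hu⟩ ⟨v, hv⟩ from huv)).2
  calc isolationNum (G □ H) ≤ {p : V × W | p.2 ∈ T p.1}.ncard := isolationNum_le_ncard hiso
    _ = _ := by rw [ncard_setOf_snd_mem, Finset.sum_congr rfl fun u _ => hT u, sum_ite_mem_eq]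

theorem isolationNum_boxProd_le_alphaK :
    isolationNum (G □ H) ≤
      alphaK G (cliqueNumber (isolationGraph H)) * isolationNum H +
        (Fintype.card V - alphaK G (cliqueNumber (isolationGraph H))) * dominationNum H := by
  obtain ⟨S, hS, ⟨col⟩⟩ := exists_coloring_ncard_eq_alphaK G (cliqueNumber (isolationGraph H))
  obtain ⟨emb⟩ := exists_topEmbedding_cliqueNumber (isolationGraph H)
  rw [← hS]
  exact isolationNum_boxProd_le_of_hom G H S (emb.toHom.comp col)

end BoxProd

/-- With `k = ω(I(H))` and `ℓ = ω(I(G))`,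
`ι(G □ H) ≤ min{α_k(G)ι(H) + (n(G) − α_k(G))γ(H), α_ℓ(H)ι(G) + (n(H) − α_ℓ(H))γ(G)}`. -/
theorem isolation_boxProd_le_isolationGraph_bound
    {V W : Type*} [Fintype V] [Fintype W] (G : SimpleGraph V) (H : SimpleGraph W)
    (k l : ℕ) (hk : k = cliqueNumber (isolationGraph H)) (hl : l = cliqueNumber (isolationGraph G)) :
    isolationNum (G.boxProd H) ≤
      min (alphaK G k * isolationNum H + (Fintype.card V - alphaK G k) * dominationNum H)
        (alphaK H l * isolationNum G + (Fintype.card W - alphaK H l) * dominationNum G) := by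
  subst hk hl
  exact le_min (isolationNum_boxProd_le_alphaK G H)
    ((isolationNum_le_of_iso (boxProdComm G H)).trans (isolationNum_boxProd_le_alphaK H G))
end

section
/- If G is a finite simple bipartite graph, then ι(G □ K₂) = γ(G). -/
lemma univ_dominating {V : Type*} (G : SimpleGraph V) : IsDominating G Set.univ := by
  ext v
  simp [closedNbhd]

lemma univ_isolating {V : Type*} (G : SimpleGraph V) : IsIsolating G Set.univ := by
  intro u hu
  exact absurd (Or.inl (Set.mem_univ u)) hu

/-- The projection of an isolating set of the prism dominates `G`. -/
lemma proj_dominating {V : Type*} (G : SimpleGraph V)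
    (A : Set (V × Fin 2)) (hA : IsIsolating (G.boxProd (⊤ : SimpleGraph (Fin 2))) A) :
    IsDominating G (Prod.fst '' A) := by
  ext v
  simp only [Set.mem_univ, iff_true]
  by_contra hv
  have key : ∀ i : Fin 2, (v, i) ∉ closedNbhd (G.boxProd (⊤ : SimpleGraph (Fin 2))) A := by
    intro i hmem
    rcases hmem with h | ⟨a, ha, hadj⟩
    · exact hv (Or.inl ⟨(v, i), h, rfl⟩)
    · rw [SimpleGraph.boxProd_adj] at hadj
      rcases hadj with ⟨hg, _⟩ | ⟨_, heq⟩
      · exact hv (Or.inr ⟨a.1, ⟨a, ha, rfl⟩, hg⟩)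
      · exact hv (Or.inl ⟨a, ha, heq⟩)
  have hadj : (G.boxProd (⊤ : SimpleGraph (Fin 2))).Adj (v, 0) (v, 1) :=
    SimpleGraph.boxProd_adj.mpr (Or.inr ⟨(SimpleGraph.top_adj (0:Fin 2) 1).mpr (by decide), rfl⟩)
  exact hA (v, 0) (key 0) (v, 1) (key 1) hadj

/-- From a dominating set and a bipartition we build an isolating set of the prism. -/
lemma construct_isolating {V : Type*} (G : SimpleGraph V) (D B : Set V)
    (hD : IsDominating G D) (hB : IndepSet G B) (hBc : IndepSet G Bᶜ) :
    IsIsolating (G.boxProd (⊤ : SimpleGraph (Fin 2)))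
      ((fun v => (v, (0 : Fin 2))) '' (D ∩ B) ∪ (fun v => (v, (1 : Fin 2))) '' (D ∩ Bᶜ)) := by
  set A := (fun v => (v, (0 : Fin 2))) '' (D ∩ B) ∪ (fun v => (v, (1 : Fin 2))) '' (D ∩ Bᶜ)
    with hAdef
  set nA := closedNbhd (G.boxProd (⊤ : SimpleGraph (Fin 2))) A with hnA
  have hdom : ∀ v : V, v ∈ D ∨ ∃ d ∈ D, G.Adj d v := fun v =>
    Set.eq_univ_iff_forall.mp hD v
  have hmem0 : ∀ v ∈ D ∩ B, (v, (0 : Fin 2)) ∈ A := fun v hv => Or.inl ⟨v, hv, rfl⟩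
  have hmem1 : ∀ v ∈ D ∩ Bᶜ, (v, (1 : Fin 2)) ∈ A := fun v hv => Or.inr ⟨v, hv, rfl⟩
  -- vertical adjacency
  have vadj : ∀ (v : V) (i j : Fin 2), i ≠ j →
      (G.boxProd (⊤ : SimpleGraph (Fin 2))).Adj (v, i) (v, j) := by
    intro v i j hij
    exact SimpleGraph.boxProd_adj.mpr (Or.inr ⟨hij, rfl⟩)
  have hadj0 : ∀ (d v : V) (i : Fin 2), G.Adj d v →
      (G.boxProd (⊤ : SimpleGraph (Fin 2))).Adj (d, i) (v, i) := by
    intro d v i h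
    exact SimpleGraph.boxProd_adj.mpr (Or.inl ⟨h, rfl⟩)
  -- a vertex with both layers uncovered cannot exist
  have contra : ∀ v : V, (v, (0 : Fin 2)) ∉ nA → (v, (1 : Fin 2)) ∉ nA → False := by
    intro v h0 h1
    rcases hdom v with hd | ⟨d, hdD, hdv⟩
    · by_cases hb : v ∈ B
      · exact h0 (Or.inl (hmem0 v ⟨hd, hb⟩))
      · exact h1 (Or.inl (hmem1 v ⟨hd, hb⟩))
    · by_cases hb : d ∈ B
      · exact h0 (Or.inr ⟨(d, 0), hmem0 d ⟨hdD, hb⟩, hadj0 d v 0 hdv⟩)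
      · exact h1 (Or.inr ⟨(d, 1), hmem1 d ⟨hdD, hb⟩, hadj0 d v 1 hdv⟩)
  -- a vertex uncovered in layer 0 lies in B
  have inB : ∀ v : V, (v, (0 : Fin 2)) ∉ nA → v ∈ B := by
    intro v h0
    rcases hdom v with hd | ⟨d, hdD, hdv⟩
    · by_cases hb : v ∈ B
      · exact hb
      · exact absurd (Or.inr ⟨(v, 1), hmem1 v ⟨hd, hb⟩, vadj v 1 0 (by decide)⟩) h0
    · by_cases hb : d ∈ B
      · exact absurd (Or.inr ⟨(d, 0), hmem0 d ⟨hdD, hb⟩, hadj0 d v 0 hdv⟩) h0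
      · by_contra hvb
        exact hBc d hb v hvb hdv
  -- a vertex uncovered in layer 1 lies in Bᶜ
  have inBc : ∀ v : V, (v, (1 : Fin 2)) ∉ nA → v ∈ Bᶜ := by
    intro v h1
    rcases hdom v with hd | ⟨d, hdD, hdv⟩
    · by_cases hb : v ∈ B
      · exact absurd (Or.inr ⟨(v, 0), hmem0 v ⟨hd, hb⟩, vadj v 0 1 (by decide)⟩) h1
      · exact hb
    · by_cases hb : d ∈ B
      · intro hvb
        exact hB d hb v hvb hdv
      · exact absurd (Or.inr ⟨(d, 1), hmem1 d ⟨hdD, hb⟩, hadj0 d v 1 hdv⟩) h1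
  rintro ⟨v, i⟩ hx ⟨w, j⟩ hy hadj
  rw [SimpleGraph.boxProd_adj] at hadj
  rcases hadj with ⟨hg, hij⟩ | ⟨htop, hvw⟩
  · -- horizontal edge, i = j
    simp only at hg hij
    subst hij
    fin_cases i
    · exact hB v (inB v hx) w (inB w hy) hg
    · exact hBc v (inBc v hx) w (inBc w hy) hg
  · -- vertical edge, v = w
    simp only at htop hvw
    subst hvw
    have hne : i ≠ j := htop.ne
    fin_cases i <;> fin_cases j
    · exact hne rfl
    · exact contra v hx hy
    · exact contra v hy hx
    · exact hne rfl

lemma cardA_le {V : Type*} [Fintype V] (D B : Set V) :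
    ((fun v => (v, (0 : Fin 2))) '' (D ∩ B) ∪ (fun v => (v, (1 : Fin 2))) '' (D ∩ Bᶜ)).ncard
      ≤ D.ncard := by
  have hinj0 : Function.Injective (fun v : V => (v, (0 : Fin 2))) := fun a b h =>
    congrArg Prod.fst h
  have hinj1 : Function.Injective (fun v : V => (v, (1 : Fin 2))) := fun a b h =>
    congrArg Prod.fst h
  calc ((fun v => (v, (0 : Fin 2))) '' (D ∩ B) ∪ (fun v => (v, (1 : Fin 2))) '' (D ∩ Bᶜ)).ncard
      ≤ ((fun v => (v, (0 : Fin 2))) '' (D ∩ B)).ncard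
        + ((fun v => (v, (1 : Fin 2))) '' (D ∩ Bᶜ)).ncard := Set.ncard_union_le _ _
    _ = (D ∩ B).ncard + (D ∩ Bᶜ).ncard := by
        rw [Set.ncard_image_of_injective _ hinj0, Set.ncard_image_of_injective _ hinj1]
    _ = D.ncard := by
        rw [show D ∩ Bᶜ = D \ B from (Set.diff_eq D B).symm]
        exact Set.ncard_inter_add_ncard_diff_eq_ncard D B (Set.toFinite D)

/-- If `G` is bipartite, then `ι(G □ K₂) = γ(G)`. -/
theorem isolation_prism_eq_domination_of_bipartite
    {V : Type*} [Fintype V] (G : SimpleGraph V)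
    (hbip : ∃ A : Set V, IndepSet G A ∧ IndepSet G Aᶜ) :
    isolationNum (G.boxProd (⊤ : SimpleGraph (Fin 2))) = dominationNum G := by
  obtain ⟨B, hB, hBc⟩ := hbip
  have hdom_ne : {n | ∃ D : Set V, IsDominating G D ∧ D.ncard = n}.Nonempty :=
    ⟨(Set.univ : Set V).ncard, Set.univ, univ_dominating G, rfl⟩
  have hiso_ne : {n | ∃ A : Set (V × Fin 2),
      IsIsolating (G.boxProd (⊤ : SimpleGraph (Fin 2))) A ∧ A.ncard = n}.Nonempty :=
    ⟨(Set.univ : Set (V × Fin 2)).ncard, Set.univ, univ_isolating _, rfl⟩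
  apply le_antisymm
  · obtain ⟨D, hD, hDcard⟩ : ∃ D : Set V, IsDominating G D ∧ D.ncard = dominationNum G :=
      Nat.sInf_mem hdom_ne
    calc isolationNum (G.boxProd (⊤ : SimpleGraph (Fin 2)))
        ≤ ((fun v => (v, (0 : Fin 2))) '' (D ∩ B)
            ∪ (fun v => (v, (1 : Fin 2))) '' (D ∩ Bᶜ)).ncard :=
          Nat.sInf_le ⟨_, construct_isolating G D B hD hB hBc, rfl⟩
      _ ≤ D.ncard := cardA_le D B
      _ = dominationNum G := hDcard
  · obtain ⟨A, hA, hAcard⟩ : ∃ A : Set (V × Fin 2),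
        IsIsolating (G.boxProd (⊤ : SimpleGraph (Fin 2))) A ∧
          A.ncard = isolationNum (G.boxProd (⊤ : SimpleGraph (Fin 2))) :=
      Nat.sInf_mem hiso_ne
    calc dominationNum G
        ≤ (Prod.fst '' A).ncard := Nat.sInf_le ⟨_, proj_dominating G A hA, rfl⟩
      _ ≤ A.ncard := Set.ncard_image_le (Set.toFinite A)
      _ = isolationNum (G.boxProd (⊤ : SimpleGraph (Fin 2))) := hAcard
end
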